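/- Let μ be a probability measure on the circle that is IP-Dirichlet along b, i.e. ‖χ_{b(F)} − 1‖_{L²(μ)} → 0 as min F → ∞ over finite nonempty F ⊆ ℕ. Then for every ω ∈ {0,1}^ℕ, the sequence of functions n ↦ χ_{b(K(ω)∩[1,n])} (where K(ω) = {k : ω_k = 1}) is Cauchy in L²(μ), converging uniformly in ω to a limit 𝒳(ω), and ω ↦ 𝒳(ω) is continuous from {0,1}^ℕ to L²(μ). -/

import Mathlib

open MeasureTheory Filter

/-- the character `χ_m(t) = e^{2πimt}` on `ℝ/ℤ` -/
noncomputable def char (m : ℕ) (t : AddCircle (1:ℝ)) : ℂ := (AddCircle.toCircle (m • t) : ℂ)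

/-- `b(K(ω) ∩ [1,n])`, where `K(ω) = {k : ω k = true}` -/
def bSum (b : ℕ → ℕ) (ω : ℕ → Bool) (n : ℕ) : ℕ :=
  ∑ k ∈ (Finset.Icc 1 n).filter (fun k => ω k = true), b k

/-!
Characters are unimodular and multiplicative, so for `m ≤ n`
`‖χ_{b(K(ω)∩[1,n])} − χ_{b(K(ω)∩[1,m])}‖ = ‖χ_{b(F)} − 1‖` with `F = K(ω) ∩ (m,n]`, whose minimum
exceeds `m`. The IP-Dirichlet property therefore makes `n ↦ χ_{b(K(ω)∩[1,n])}` uniformly Cauchy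
in `L²(μ)`, and completeness of `L²(μ)` gives a uniform limit `𝒳`. Each term depends on finitely
many coordinates of `ω`, hence is continuous on `{0,1}^ℕ`, and so is the uniform limit.
-/

section Lp

variable {α E : Type*} [MeasurableSpace α] {μ : Measure α} [NormedAddCommGroup E]

lemma MeasureTheory.MemLp.norm_toLp_sq {f : α → E} (hf : MemLp f 2 μ) :
    ‖hf.toLp f‖ ^ 2 = ∫ a, ‖f a‖ ^ 2 ∂μ := by
  rw [Lp.norm_toLp, toReal_eLpNorm hf.1,
    lpNorm_eq_integral_norm_rpow_toReal two_ne_zero ENNReal.ofNat_ne_top hf.1, ← Real.rpow_natCast,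
    ← Real.rpow_mul (integral_nonneg fun a => by positivity)]
  norm_num

lemma MeasureTheory.MemLp.dist_toLp_sq {f g : α → E} (hf : MemLp f 2 μ) (hg : MemLp g 2 μ) :
    dist (hf.toLp f) (hg.toLp g) ^ 2 = ∫ a, ‖f a - g a‖ ^ 2 ∂μ := by
  rw [dist_eq_norm, ← MemLp.toLp_sub, (hf.sub hg).norm_toLp_sq]
  rfl

lemma MeasureTheory.Lp.dist_sq_eq_integral (f g : Lp E 2 μ) :
    dist f g ^ 2 = ∫ a, ‖f a - g a‖ ^ 2 ∂μ := by
  simpa only [Lp.toLp_coeFn] using (Lp.memLp f).dist_toLp_sq (Lp.memLp g)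

end Lp

lemma exists_tendstoUniformly_of_uniformCauchySeqOn {ι α β : Type*} [UniformSpace β]
    [CompleteSpace β] {F : ι → α → β} {p : Filter ι} [p.NeBot]
    (hF : UniformCauchySeqOn F p Set.univ) : ∃ G : α → β, TendstoUniformly F G p := by
  choose G hG using fun a => CompleteSpace.complete (hF.cauchy_map (Set.mem_univ a))
  exact ⟨G, tendstoUniformlyOn_univ.mp (hF.tendstoUniformlyOn_of_tendsto fun a _ => hG a)⟩

section char

lemma norm_char (m : ℕ) (t : AddCircle (1:ℝ)) : ‖char m t‖ = 1 := by
  simp [char, Circle.norm_coe]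

lemma char_zero (t : AddCircle (1:ℝ)) : char 0 t = 1 := by simp [char]

lemma char_add (m n : ℕ) (t : AddCircle (1:ℝ)) : char (m + n) t = char m t * char n t := by
  simp [char, add_nsmul, AddCircle.toCircle_add]

lemma norm_char_add_sub_char (m n : ℕ) (t : AddCircle (1:ℝ)) :
    ‖char (m + n) t - char m t‖ = ‖char n t - 1‖ := by
  rw [char_add, ← mul_sub_one, norm_mul, norm_char, one_mul]

lemma continuous_char (m : ℕ) : Continuous (char m) :=
  continuous_subtype_val.comp (AddCircle.continuous_toCircle.comp (continuous_const_smul m))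

lemma memLp_char {μ : Measure (AddCircle (1:ℝ))} [IsFiniteMeasure μ] (p : ENNReal) (m : ℕ) :
    MemLp (char m) p μ :=
  .of_bound (continuous_char m).aestronglyMeasurable 1 (.of_forall fun t => (norm_char m t).le)

noncomputable def charLp (μ : Measure (AddCircle (1:ℝ))) [IsFiniteMeasure μ] (m : ℕ) :
    Lp ℂ 2 μ :=
  (memLp_char 2 m).toLp (char m)

end char

section bSum

open Finset

lemma bSum_eq_sum_Ioc (b : ℕ → ℕ) (ω : ℕ → Bool) (n : ℕ) :
    bSum b ω n = ∑ k ∈ Ioc 0 n, if ω k = true then b k else 0 := by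
  rw [bSum, sum_filter, ← Icc_add_one_left_eq_Ioc, zero_add]

lemma bSum_eq_add_sum_Ioc (b : ℕ → ℕ) (ω : ℕ → Bool) {m n : ℕ} (hmn : m ≤ n) :
    bSum b ω n = bSum b ω m + ∑ k ∈ (Ioc m n).filter (fun k => ω k = true), b k := by
  rw [bSum_eq_sum_Ioc, bSum_eq_sum_Ioc, sum_filter, sum_Ioc_consecutive _ m.zero_le hmn]

lemma continuous_bSum (b : ℕ → ℕ) (n : ℕ) : Continuous fun ω => bSum b ω n := by
  simp_rw [bSum_eq_sum_Ioc]
  exact continuous_finsetSum _ fun k _ =>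
    (continuous_of_discreteTopology (f := fun x : Bool => if x = true then b k else 0)).comp
      (continuous_apply k)

end bSum

def IsIPDirichlet (b : ℕ → ℕ) (μ : Measure (AddCircle (1:ℝ))) : Prop :=
  ∀ ε > 0, ∃ K : ℕ, ∀ F : Finset ℕ, ∀ hF : F.Nonempty, K ≤ F.min' hF →
    ∫ t, ‖char (∑ j ∈ F, b j) t - 1‖ ^ 2 ∂μ < ε

namespace IsIPDirichlet

variable {b : ℕ → ℕ} {μ : Measure (AddCircle (1:ℝ))}

lemma exists_integral_norm_char_bSum_sub_sq_lt (h : IsIPDirichlet b μ) :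
    ∀ ε > 0, ∃ N : ℕ, ∀ ω : ℕ → Bool, ∀ m n, N ≤ m → N ≤ n →
      ∫ t, ‖char (bSum b ω n) t - char (bSum b ω m) t‖ ^ 2 ∂μ < ε := by
  intro ε hε
  obtain ⟨K, hK⟩ := h ε hε
  have of_le (ω : ℕ → Bool) {m n : ℕ} (hKm : K ≤ m) (hmn : m ≤ n) :
      ∫ t, ‖char (bSum b ω n) t - char (bSum b ω m) t‖ ^ 2 ∂μ < ε := by
    simp_rw [bSum_eq_add_sum_Ioc b ω hmn, norm_char_add_sub_char]
    set F := (Finset.Ioc m n).filter (fun k => ω k = true)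
    rcases F.eq_empty_or_nonempty with hF | hF
    · simpa [hF, char_zero] using hε
    · refine hK F hF (hKm.trans ?_)
      exact (Finset.mem_Ioc.1 (Finset.mem_filter.1 (F.min'_mem hF)).1).1.le
  refine ⟨K, fun ω m n hm hn => ?_⟩
  rcases le_total m n with hmn | hnm
  · exact of_le ω hm hmn
  · simpa only [norm_sub_rev] using of_le ω hn hnm

lemma uniformCauchySeqOn_charLp_bSum [IsFiniteMeasure μ] (h : IsIPDirichlet b μ) :
    UniformCauchySeqOn (fun n ω => charLp μ (bSum b ω n)) atTop Set.univ := by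
  refine Metric.uniformCauchySeqOn_iff.2 fun ε hε => ?_
  obtain ⟨N, hN⟩ := h.exists_integral_norm_char_bSum_sub_sq_lt (ε ^ 2) (by positivity)
  refine ⟨N, fun m hm n hn ω _ => ?_⟩
  rw [← pow_lt_pow_iff_left₀ dist_nonneg hε.le two_ne_zero, charLp, charLp,
    MemLp.dist_toLp_sq]
  exact hN ω n m hn hm

end IsIPDirichlet

lemma continuous_charLp_bSum (b : ℕ → ℕ) (μ : Measure (AddCircle (1:ℝ))) [IsFiniteMeasure μ]
    (n : ℕ) : Continuous fun ω => charLp μ (bSum b ω n) :=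
  (continuous_of_discreteTopology (f := charLp μ)).comp (continuous_bSum b n)

theorem stmt14_general (b : ℕ → ℕ)
    (μ : Measure (AddCircle (1:ℝ))) [IsProbabilityMeasure μ]
    (hIP : ∀ ε > 0, ∃ K : ℕ, ∀ F : Finset ℕ, ∀ hF : F.Nonempty, K ≤ F.min' hF →
      (∫ t, ‖char (∑ j ∈ F, b j) t - 1‖ ^ 2 ∂μ) < ε) :
    ∃ 𝒳 : (ℕ → Bool) → AddCircle (1:ℝ) → ℂ,
      -- Cauchy in `L²(μ)`, uniformly in `ω`:
      (∀ ε > 0, ∃ N : ℕ, ∀ ω : ℕ → Bool, ∀ m n, N ≤ m → N ≤ n →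
        (∫ t, ‖char (bSum b ω n) t - char (bSum b ω m) t‖ ^ 2 ∂μ) < ε) ∧
      -- uniform (in `ω`) convergence to `𝒳(ω)` in `L²(μ)`:
      (∀ ε > 0, ∃ N : ℕ, ∀ ω : ℕ → Bool, ∀ n, N ≤ n →
        (∫ t, ‖char (bSum b ω n) t - 𝒳 ω t‖ ^ 2 ∂μ) < ε) ∧
      -- continuity of `ω ↦ 𝒳(ω)` from `{0,1}^ℕ` into `L²(μ)`:
      (∀ ω : ℕ → Bool,
        Tendsto (fun ω' : ℕ → Bool => ∫ t, ‖𝒳 ω' t - 𝒳 ω t‖ ^ 2 ∂μ) (nhds ω) (nhds 0)) := by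
  have hIP : IsIPDirichlet b μ := hIP
  obtain ⟨𝒳, h𝒳⟩ :=
    exists_tendstoUniformly_of_uniformCauchySeqOn hIP.uniformCauchySeqOn_charLp_bSum
  have h𝒳_cont : Continuous 𝒳 := h𝒳.continuous (.of_forall (continuous_charLp_bSum b μ))
  refine ⟨fun ω => 𝒳 ω, hIP.exists_integral_norm_char_bSum_sub_sq_lt, fun ε hε => ?_, fun ω => ?_⟩
  · obtain ⟨N, hN⟩ := eventually_atTop.1
      (Metric.tendstoUniformly_iff.1 h𝒳 (√ε) (Real.sqrt_pos.2 hε))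
    refine ⟨N, fun ω n hn => ?_⟩
    rw [← (memLp_char 2 _).dist_toLp_sq (Lp.memLp (𝒳 ω)), Lp.toLp_coeFn, dist_comm,
      ← Real.lt_sqrt dist_nonneg]
    exact hN n hn ω
  · simp_rw [← Lp.dist_sq_eq_integral]
    simpa using (tendsto_iff_dist_tendsto_zero.1 (h𝒳_cont.tendsto ω)).pow 2

/-- If the probability measure `μ` on the circle is IP-Dirichlet along `b`
(`‖χ_{b(F)} − 1‖_{L²(μ)} → 0` as `min F → ∞`), then for every `ω ∈ {0,1}^ℕ` the
sequence `n ↦ χ_{b(K(ω)∩[1,n])}` is Cauchy in `L²(μ)`, converging uniformly in `ω`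
to a limit `𝒳(ω)`, and `ω ↦ 𝒳(ω)` is continuous into `L²(μ)`. -/
theorem stmt14 (b : ℕ → ℕ) (hb : StrictMono b) (hbpos : ∀ n, 0 < b n)
    (μ : Measure (AddCircle (1:ℝ))) [IsProbabilityMeasure μ]
    (hIP : ∀ ε > 0, ∃ K : ℕ, ∀ F : Finset ℕ, ∀ hF : F.Nonempty, K ≤ F.min' hF →
      (∫ t, ‖char (∑ j ∈ F, b j) t - 1‖ ^ 2 ∂μ) < ε) :
    ∃ 𝒳 : (ℕ → Bool) → AddCircle (1:ℝ) → ℂ,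
      -- Cauchy in `L²(μ)`, uniformly in `ω`:
      (∀ ε > 0, ∃ N : ℕ, ∀ ω : ℕ → Bool, ∀ m n, N ≤ m → N ≤ n →
        (∫ t, ‖char (bSum b ω n) t - char (bSum b ω m) t‖ ^ 2 ∂μ) < ε) ∧
      -- uniform (in `ω`) convergence to `𝒳(ω)` in `L²(μ)`:
      (∀ ε > 0, ∃ N : ℕ, ∀ ω : ℕ → Bool, ∀ n, N ≤ n →
        (∫ t, ‖char (bSum b ω n) t - 𝒳 ω t‖ ^ 2 ∂μ) < ε) ∧
      -- continuity of `ω ↦ 𝒳(ω)` from `{0,1}^ℕ` into `L²(μ)`: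
      (∀ ω : ℕ → Bool,
        Tendsto (fun ω' : ℕ → Bool => ∫ t, ‖𝒳 ω' t - 𝒳 ω t‖ ^ 2 ∂μ) (nhds ω) (nhds 0)) :=
  stmt14_general b μ hIP
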